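/- arXiv:math/0302347 — 2 statements merged into one kernel-verified Lean document; each statement's English description precedes it below -/
import Mathlib

section
/- Let (E, ≤, ε) be a heap with pieces in P and concurrency relation 𝒞 whose concurrency subgraph contains no circuits, and let [a, b] be a minimal balanced subinterval of E. Let c ∈ S_{[a,b]}, let a′ be the minimal element of S_{[a,b]} with label ε(c), and let b′ be the maximal element of S_{[a,b]} with label ε(c). Then a < a′ and b′ < b are covering relations in E. -/
/-- `ρ` is a rank function for the poset `E`:
it increases by exactly 1 along covering relations. -/
def IsRankFunction {E : Type*} [PartialOrder E] (ρ : E → ℤ) : Prop :=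
  ∀ a b : E, a ⋖ b → ρ b = ρ a + 1

/-- A poset is ranked if it admits a rank function. -/
def Ranked (E : Type*) [PartialOrder E] : Prop :=
  ∃ ρ : E → ℤ, IsRankFunction ρ

/-- Two elements lie in the same connected component of the poset: the
equivalence relation generated by the covering relation. -/
def SameComponent {E : Type*} [PartialOrder E] (a b : E) : Prop :=
  Relation.EqvGen (fun x y : E => x ⋖ y) a b

/-- The heap axioms for a labelling `ε : E → P` of a poset `E` with
concurrency relation `C` on the pieces `P`. -/
def IsHeap {E P : Type*} [PartialOrder E] (C : P → P → Prop) (ε : E → P) : Prop :=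
  (∀ α β : E, C (ε α) (ε β) → α ≤ β ∨ β ≤ α) ∧
  (∀ α β : E, α ≤ β ↔ Relation.TransGen (fun x y : E => x ≤ y ∧ C (ε x) (ε y)) α β)

/-- `[a, b]` is a minimal balanced subinterval: `a ≠ b`, `ε a = ε b`, and the
only elements of `[a, b]` with label `ε a` are `a` and `b`. -/
def MinBalanced {E P : Type*} [PartialOrder E] (ε : E → P) (a b : E) : Prop :=
  a < b ∧ ε a = ε b ∧ ∀ c ∈ Set.Icc a b, ε c = ε a → c = a ∨ c = b

/-- The set `S_{[a,b]}` of elements of `[a, b]` whose label is distinct from,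
but concurrent with, the label of `a`. -/
def intervalS {E P : Type*} [PartialOrder E] (C : P → P → Prop) (ε : E → P)
    (a b : E) : Set E :=
  {c | c ∈ Set.Icc a b ∧ ε c ≠ ε a ∧ C (ε a) (ε c)}

/-- The concurrency subgraph of the heap (the simple graph on the labels
occurring in `E`, with distinct labels adjacent iff concurrent) is acyclic. -/
def NoCircuits {E P : Type*} [PartialOrder E] (C : P → P → Prop) (ε : E → P) : Prop :=
  (SimpleGraph.fromRel (fun v w : Set.range ε => C v.1 w.1)).IsAcyclic

/-!
If `a < x < a'`, a chain of concurrent steps from `a` up to `x` leaves `a` through some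
`s ∈ S_{[a,b]}` with `s < a'`, so `ε s ≠ ε a'` by minimality of `a'`. A chain of concurrent steps
from `s` up to `a'` stays inside `(a, b)`, hence gives a walk from `ε s` to `ε a'` in the
concurrency graph avoiding `ε a`; together with the path `ε s — ε a — ε a'` this contradicts
acyclicity. The statement about `b'` is the same argument in the dual heap.
-/

open Set OrderDual

theorem SimpleGraph.IsAcyclic.mem_support_of_adj_of_adj {V : Type*} {G : SimpleGraph V}
    (hG : G.IsAcyclic) {u v w : V} (huw : G.Adj u w) (hwv : G.Adj w v) (huv : u ≠ v)
    (p : G.Walk u v) : w ∈ p.support := by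
  classical
  refine p.support_bypass_subset_support (hG.mem_support_of_ne_mem_support_of_adj_of_isPath
    p.bypass_isPath (SimpleGraph.Path.singleton huw).2 hwv.symm ?_)
  simp [huv.symm, hwv.ne']

section Heap

variable {E P : Type*} {C : P → P → Prop} {ε : E → P}

abbrev concurrencyGraph (C : P → P → Prop) (ε : E → P) : SimpleGraph (range ε) :=
  SimpleGraph.fromRel fun v w => C v.1 w.1

theorem concurrencyGraph_adj_of_ne {x y : E} (hne : ε x ≠ ε y) (hC : C (ε x) (ε y)) :
    (concurrencyGraph C ε).Adj (rangeFactorization ε x) (rangeFactorization ε y) :=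
  (SimpleGraph.fromRel_adj _ _ _).mpr ⟨fun h => hne (congrArg Subtype.val h), Or.inl hC⟩

variable [PartialOrder E]

theorem exists_walk_of_le_of_concurrent {u v : E} (huv : u ≤ v) (hC : C (ε u) (ε v)) :
    ∃ w : (concurrencyGraph C ε).Walk (rangeFactorization ε u) (rangeFactorization ε v),
      ∀ p ∈ w.support, p ∈ rangeFactorization ε '' Icc u v := by
  by_cases he : ε u = ε v
  · refine ⟨SimpleGraph.Walk.nil.copy rfl (Subtype.ext he), fun p hp => ⟨u, ⟨le_rfl, huv⟩, ?_⟩⟩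
    simp only [SimpleGraph.Walk.support_copy, SimpleGraph.Walk.support_nil,
      List.mem_singleton] at hp
    exact hp.symm
  · refine ⟨(concurrencyGraph_adj_of_ne he hC).toWalk, fun p hp => ?_⟩
    simp only [SimpleGraph.Adj.toWalk, SimpleGraph.Walk.support_cons,
      SimpleGraph.Walk.support_nil, List.mem_cons, List.not_mem_nil,
      or_false] at hp
    rcases hp with rfl | rfl
    exacts [⟨u, ⟨le_rfl, huv⟩, rfl⟩, ⟨v, ⟨huv, le_rfl⟩, rfl⟩]

theorem IsHeap.exists_walk (hheap : IsHeap C ε) {u v : E} (huv : u ≤ v) :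
    ∃ w : (concurrencyGraph C ε).Walk (rangeFactorization ε u) (rangeFactorization ε v),
      ∀ p ∈ w.support, p ∈ rangeFactorization ε '' Icc u v := by
  induction (hheap.2 u v).mp huv with
  | single h => exact exists_walk_of_le_of_concurrent h.1 h.2
  | @tail m v hum' hmv ih =>
    have hum : u ≤ m := (hheap.2 u m).mpr hum'
    obtain ⟨w₁, hw₁⟩ := ih hum
    obtain ⟨w₂, hw₂⟩ := exists_walk_of_le_of_concurrent hmv.1 hmv.2
    refine ⟨w₁.append w₂, fun p hp => ?_⟩
    rcases List.mem_append.mp (SimpleGraph.Walk.support_append w₁ w₂ ▸ hp) with hp | hp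
    · exact image_mono (Icc_subset_Icc_right hmv.1) (hw₁ p hp)
    · exact image_mono (Icc_subset_Icc_left hum) (hw₂ p (List.mem_of_mem_tail hp))

theorem IsHeap.exists_concurrent_of_lt (hheap : IsHeap C ε) {a x : E} (hax : a < x) :
    ∃ y, a < y ∧ y ≤ x ∧ C (ε a) (ε y) := by
  suffices ∀ x, Relation.TransGen (fun x y => x ≤ y ∧ C (ε x) (ε y)) a x → a ≠ x →
      ∃ y, a < y ∧ y ≤ x ∧ C (ε a) (ε y) from this x ((hheap.2 a x).mp hax.le) hax.ne
  intro x hx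
  induction hx with
  | single h => exact fun hne => ⟨_, h.1.lt_of_ne hne, le_rfl, h.2⟩
  | @tail m x _ hmx ih =>
    intro hne
    by_cases ham : a = m
    · subst ham
      exact ⟨x, hmx.1.lt_of_ne hne, le_rfl, hmx.2⟩
    · obtain ⟨y, hay, hym, hC⟩ := ih ham
      exact ⟨y, hay, hym.trans hmx.1, hC⟩

theorem covBy_of_minimal_label (hheap : IsHeap C ε) (hacyclic : NoCircuits C ε)
    {a b a' : E} (hmb : MinBalanced ε a b) (ha' : a' ∈ intervalS C ε a b)
    (ha'min : ∀ d ∈ intervalS C ε a b, ε d = ε a' → a' ≤ d) : a ⋖ a' := by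
  obtain ⟨⟨haa', ha'b⟩, ha'a, haa'C⟩ := ha'
  obtain ⟨-, hεab, hlabel⟩ := hmb
  refine ⟨haa'.lt_of_ne fun h => ha'a (congrArg ε h).symm, fun x hax hxa' => ?_⟩
  obtain ⟨s, has, hsx, hasC⟩ := hheap.exists_concurrent_of_lt hax
  have hsa' : s < a' := hsx.trans_lt hxa'
  have hεsa : ε s ≠ ε a := fun h => by
    rcases hlabel s ⟨has.le, hsa'.le.trans ha'b⟩ h with rfl | rfl
    · exact has.false
    · exact (hsa'.trans_le ha'b).false
  have hsS : s ∈ intervalS C ε a b := ⟨⟨has.le, hsa'.le.trans ha'b⟩, hεsa, hasC⟩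
  have hεsa' : ε s ≠ ε a' := fun h => (ha'min s hsS h).not_gt hsa'
  obtain ⟨w, hw⟩ := hheap.exists_walk hsa'.le
  have hmem := SimpleGraph.IsAcyclic.mem_support_of_adj_of_adj hacyclic
    (concurrencyGraph_adj_of_ne (Ne.symm hεsa) hasC).symm
    (concurrencyGraph_adj_of_ne (Ne.symm ha'a) haa'C)
    (fun h => hεsa' (congrArg Subtype.val h)) w
  obtain ⟨z, ⟨hsz, hza'⟩, hz⟩ := hw _ hmem
  rcases hlabel z ⟨has.le.trans hsz, hza'.trans ha'b⟩ (congrArg Subtype.val hz) with rfl | rfl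
  · exact (has.trans_le hsz).false
  · exact ha'a (by rw [le_antisymm ha'b hza', hεab])

theorem IsHeap.dual (hsymm : Symmetric C) (hheap : IsHeap C ε) : IsHeap C (ε ∘ ofDual) := by
  refine ⟨fun α β h => (hheap.1 α β h).symm, fun α β => ?_⟩
  refine (hheap.2 (ofDual β) (ofDual α)).trans (Relation.transGen_swap.symm.trans ?_)
  exact ⟨fun h => Relation.TransGen.mono (fun _ _ => And.imp_right fun h => hsymm h) _ _ h,
    fun h => Relation.TransGen.mono (fun _ _ => And.imp_right fun h => hsymm h) _ _ h⟩

theorem MinBalanced.dual {a b : E} (hmb : MinBalanced ε a b) :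
    MinBalanced (ε ∘ ofDual) (toDual b) (toDual a) := by
  obtain ⟨hab, hεab, hlabel⟩ := hmb
  refine ⟨hab, hεab.symm, fun z hz hzb => ?_⟩
  exact (hlabel (ofDual z) ⟨hz.2, hz.1⟩ (hzb.trans hεab.symm)).symm

theorem intervalS_dual {a b : E} (hεab : ε a = ε b) :
    intervalS C (ε ∘ ofDual) (toDual b) (toDual a) = ofDual ⁻¹' intervalS C ε a b := by
  ext x
  simp only [intervalS, mem_ofPred_eq, mem_preimage, Function.comp_apply, ofDual_toDual,
    Icc_toDual, hεab]

end Heap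

theorem covBy_of_min_max_label_general {E P : Type*} [PartialOrder E]
    (C : P → P → Prop) (hsymm : Symmetric C)
    (ε : E → P) (hheap : IsHeap C ε) (hacyclic : NoCircuits C ε)
    (a b : E) (hmb : MinBalanced ε a b)
    (c : E)
    (a' b' : E)
    (ha'mem : a' ∈ intervalS C ε a b) (ha'lab : ε a' = ε c)
    (ha'min : ∀ d ∈ intervalS C ε a b, ε d = ε c → a' ≤ d)
    (hb'mem : b' ∈ intervalS C ε a b) (hb'lab : ε b' = ε c)
    (hb'max : ∀ d ∈ intervalS C ε a b, ε d = ε c → d ≤ b') :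
    a ⋖ a' ∧ b' ⋖ b := by
  refine ⟨covBy_of_minimal_label hheap hacyclic hmb ha'mem
    fun d hd hdl => ha'min d hd (hdl.trans ha'lab), ?_⟩
  have hS := intervalS_dual (C := C) hmb.2.1
  refine toDual_covBy_toDual_iff.mp
    (covBy_of_minimal_label (hheap.dual hsymm) hacyclic hmb.dual (hS ▸ hb'mem) ?_)
  rw [hS]
  exact fun d hd hdl => hb'max d hd (hdl.trans hb'lab)

/-- Lemma 3.3.5: in a heap with acyclic concurrency subgraph, if [a, b] is a
minimal balanced subinterval, c ∈ S_{[a,b]}, and a' (resp. b') is the minimal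
(resp. maximal) element of S_{[a,b]} with label ε c, then a < a' and b' < b are
covering relations in E. -/
theorem covBy_of_min_max_label {E P : Type*} [PartialOrder E] [Finite E]
    (C : P → P → Prop) (hrefl : Reflexive C) (hsymm : Symmetric C)
    (ε : E → P) (hheap : IsHeap C ε) (hacyclic : NoCircuits C ε)
    (a b : E) (hmb : MinBalanced ε a b)
    (c : E) (hc : c ∈ intervalS C ε a b)
    (a' b' : E)
    (ha'mem : a' ∈ intervalS C ε a b) (ha'lab : ε a' = ε c)
    (ha'min : ∀ d ∈ intervalS C ε a b, ε d = ε c → a' ≤ d)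
    (hb'mem : b' ∈ intervalS C ε a b) (hb'lab : ε b' = ε c)
    (hb'max : ∀ d ∈ intervalS C ε a b, ε d = ε c → d ≤ b') :
    a ⋖ a' ∧ b' ⋖ b :=
  covBy_of_min_max_label_general C hsymm ε hheap hacyclic a b hmb c a' b' ha'mem ha'lab ha'min
    hb'mem hb'lab hb'max
end

section
/- Let (W, S) be a Coxeter group of type A_n. Then every heap of a fully commutative element of W is ranked. -/
/-- A single commutation move: swap an adjacent pair of commuting generators. -/
def CommMove {B : Type*} (M : CoxeterMatrix B) (ω ω' : List B) : Prop :=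
  ∃ (l₁ l₂ : List B) (s t : B), M s t = 2 ∧
    ω = l₁ ++ s :: t :: l₂ ∧ ω' = l₁ ++ t :: s :: l₂

/-- `w` is fully commutative: any two reduced words for `w` are related by a
sequence of commutation moves. -/
def IsFullyCommutative {B W : Type*} [Group W] {M : CoxeterMatrix B}
    (cs : CoxeterSystem M W) (w : W) : Prop :=
  ∀ ω ω' : List B, cs.IsReduced ω → cs.IsReduced ω' →
    cs.wordProd ω = w → cs.wordProd ω' = w →
      Relation.EqvGen (CommMove M) ω ω'

/-- The Coxeter system is FC-finite: only finitely many fully commutative elements. -/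
def FCFinite {B W : Type*} [Group W] {M : CoxeterMatrix B}
    (cs : CoxeterSystem M W) : Prop :=
  {w : W | IsFullyCommutative cs w}.Finite

/-- A heap with pieces in `B` (concurrency: `m s t ≠ 2`) is the heap of a fully
commutative element for the Coxeter matrix `m` (`m s t = 0` encodes `m(s,t) = ∞`):
there is no convex chain with labels alternating `s, t, s, …` of length `m s t ≥ 3`,
and no covering relation whose endpoints carry the same label. -/
def IsFCHeap {E B : Type*} [PartialOrder E] (m : B → B → ℕ) (ε : E → B) : Prop :=
  IsHeap (fun s t => m s t ≠ 2) ε ∧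
  (∀ (s t : B) (k : ℕ), 3 ≤ k → m s t = k →
    ¬ ∃ α : Fin k → E, StrictMono α ∧
        (∀ γ : E, ∀ i j : Fin k, α i < γ → γ < α j → ∃ l : Fin k, γ = α l) ∧
        (∀ i : Fin k, ε (α i) = if (i : ℕ) % 2 = 0 then s else t)) ∧
  (∀ α β : E, α ⋖ β → ε α ≠ ε β)

/-!
In a fully commutative heap of type A every covering relation changes the label by exactly one,
and the interior of a minimal balanced interval `[u, v]` consists of exactly one piece of each
label `ε u ± 1`. Uniqueness comes from induction on smaller intervals together with a discrete
intermediate value property of labels along chains; existence comes from the absence of convex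
chains `s t s`.

A rank function is then built on lower sets by adding maximal elements one at a time. A new
element `x` has at most two lower covers, labelled `ε x ± 1`. If some piece below `x` has label
`ε x`, the last such piece is a common lower cover of both; otherwise no piece of the lower set has
label `ε x`, and the ranks of the pieces with larger labels can be shifted to make the two covers
agree.
-/

namespace CoxeterMatrix

theorem A_ne_two_iff {n : ℕ} {s t : Fin n} :
    CoxeterMatrix.A n s t ≠ 2 ↔ (s : ℕ) ≤ t + 1 ∧ (t : ℕ) ≤ s + 1 := by
  simp only [CoxeterMatrix.A, Matrix.of_apply]
  split_ifs <;> omega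

theorem A_eq_three {n : ℕ} {s t : Fin n} (h : (s : ℕ) + 1 = t ∨ (t : ℕ) + 1 = s) :
    CoxeterMatrix.A n s t = 3 := by
  simp only [CoxeterMatrix.A, Matrix.of_apply]
  split_ifs <;> omega

end CoxeterMatrix

theorem exists_minBalanced_of_lt {E P : Type*} [PartialOrder E] [Finite E] {ε : E → P}
    {a b : E} (hab : a < b) (hl : ε a = ε b) : ∃ c, a ≤ c ∧ MinBalanced ε c b := by
  obtain ⟨c, ⟨hac, hcb, hcl⟩, hmax⟩ :=
    (Set.toFinite {c | a ≤ c ∧ c < b ∧ ε c = ε b}).exists_maximal ⟨a, le_rfl, hab, hl⟩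
  refine ⟨c, hac, hcb, hcl, fun γ ⟨hcγ, hγb⟩ hγl => ?_⟩
  rcases hγb.lt_or_eq with hγb | rfl
  · exact .inl ((hmax ⟨hac.trans hcγ, hγb, hγl.trans hcl⟩ hcγ).antisymm hcγ)
  · exact .inr rfl

namespace IsHeap

variable {E P : Type*} [PartialOrder E] {C : P → P → Prop} {ε : E → P}

theorem exists_concurrent_of_lt_s12 (h : IsHeap C ε) {a b : E} (hab : a < b) :
    ∃ c, a < c ∧ c ≤ b ∧ C (ε a) (ε c) := by
  induction (h.2 a b).1 hab.le using Relation.TransGen.head_induction_on with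
  | single hr => exact ⟨b, hab, le_rfl, hr.2⟩
  | @head a c hr hcb ih =>
    rcases hr.1.lt_or_eq with hac | rfl
    · exact ⟨c, hac, (h.2 c b).2 hcb, hr.2⟩
    · exact ih hab

theorem concurrent_of_covBy (h : IsHeap C ε) {a b : E} (hab : a ⋖ b) : C (ε a) (ε b) := by
  obtain ⟨c, hac, hcb, hC⟩ := h.exists_concurrent_of_lt_s12 hab.lt
  obtain rfl : c = b := hcb.eq_of_not_lt (hab.2 hac)
  exact hC

theorem eq_of_covBy_of_concurrent (h : IsHeap C ε) {a b x : E} (ha : a ⋖ x) (hb : b ⋖ x)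
    (hC : C (ε a) (ε b)) : a = b := by
  rcases h.1 a b hC with hab | hba
  · exact hab.eq_of_not_lt (ha.2 · hb.lt)
  · exact (hba.eq_of_not_lt (hb.2 · ha.lt)).symm

end IsHeap

theorem MinBalanced.label_ne {E P : Type*} [PartialOrder E] {ε : E → P} {u v γ : E}
    (huv : MinBalanced ε u v) (hγ : γ ∈ Set.Ioo u v) : ε γ ≠ ε u := fun hl =>
  (huv.2.2 γ (Set.Ioo_subset_Icc_self hγ) hl).elim hγ.1.ne' hγ.2.ne

theorem IsFCHeap.Ioo_ne_singleton {E B : Type*} [PartialOrder E] {m : B → B → ℕ} {ε : E → B}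
    (h : IsFCHeap m ε) {u v c : E} (hm : m (ε u) (ε c) = 3) (hv : ε v = ε u) :
    Set.Ioo u v ≠ {c} := by
  intro hIoo
  have hc : c ∈ Set.Ioo u v := hIoo ▸ rfl
  have hmem : ∀ i, ![u, c, v] i ∈ Set.Icc u v := by
    intro i
    fin_cases i <;> simp [hc.1.le, hc.2.le, (hc.1.trans hc.2).le]
  refine h.2.1 (ε u) (ε c) 3 le_rfl hm ⟨![u, c, v], ?_, fun γ i j hi hj => ⟨1, ?_⟩, ?_⟩
  · refine Fin.strictMono_iff_lt_succ.2 fun i => ?_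
    fin_cases i
    exacts [hc.1, hc.2]
  · have hγ : γ ∈ Set.Ioo u v := ⟨(hmem i).1.trans_lt hi, hj.trans_le (hmem j).2⟩
    rw [hIoo] at hγ
    exact hγ
  · intro i
    fin_cases i <;> simp [hv]

def IsRankFunctionOn {E : Type*} [PartialOrder E] (D : Set E) (ρ : E → ℤ) : Prop :=
  ∀ a ∈ D, ∀ b ∈ D, a ⋖ b → ρ b = ρ a + 1

theorem IsRankFunctionOn.update {E : Type*} [PartialOrder E] [DecidableEq E] {D : Set E}
    {ρ : E → ℤ} {x : E} (hρ : IsRankFunctionOn (D \ {x}) ρ) (hx : ∀ y ∈ D, ¬ x < y) {w : ℤ}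
    (hw : ∀ c, c ⋖ x → w = ρ c + 1) : IsRankFunctionOn D (Function.update ρ x w) := by
  intro a ha b hb hab
  have hax : a ≠ x := fun hax => hx b hb (hax ▸ hab.lt)
  rcases eq_or_ne b x with rfl | hbx
  · rw [Function.update_self, Function.update_of_ne hax]
    exact hw a hab
  · rw [Function.update_of_ne hbx, Function.update_of_ne hax]
    exact hρ a ⟨ha, hax⟩ b ⟨hb, hbx⟩ hab

section TypeA

variable {E : Type*} [PartialOrder E] {n : ℕ} {ε : E → Fin n}

theorem IsHeap.exists_mem_Icc_label_eq (h : IsHeap (fun s t => CoxeterMatrix.A n s t ≠ 2) ε)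
    {a b : E} (hab : a ≤ b) {t : ℕ} (ht : t ∈ Set.uIcc (ε a : ℕ) (ε b)) :
    ∃ w ∈ Set.Icc a b, (ε w : ℕ) = t := by
  have hT := (h.2 a b).1 hab
  clear hab
  induction hT using Relation.TransGen.head_induction_on with
  | @single a hr =>
    have := CoxeterMatrix.A_ne_two_iff.1 hr.2
    rw [Set.mem_uIcc] at ht
    by_cases hta : (ε a : ℕ) = t
    · exact ⟨a, ⟨le_rfl, hr.1⟩, hta⟩
    · exact ⟨b, ⟨hr.1, le_rfl⟩, by omega⟩
  | @head a c hr hcb ih =>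
    have := CoxeterMatrix.A_ne_two_iff.1 hr.2
    by_cases htc : t ∈ Set.uIcc (ε c : ℕ) (ε b)
    · obtain ⟨w, hw, hwt⟩ := ih htc
      exact ⟨w, ⟨hr.1.trans hw.1, hw.2⟩, hwt⟩
    · rw [Set.mem_uIcc] at ht htc
      exact ⟨a, ⟨le_rfl, hr.1.trans ((h.2 c b).2 hcb)⟩, by omega⟩

theorem IsFCHeap.label_covBy (h : IsFCHeap (fun s t => CoxeterMatrix.A n s t) ε) {a b : E}
    (hab : a ⋖ b) : (ε a : ℕ) + 1 = ε b ∨ (ε b : ℕ) + 1 = ε a := by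
  have := CoxeterMatrix.A_ne_two_iff.1 (h.1.concurrent_of_covBy hab)
  have := Fin.val_injective.ne (h.2.2 a b hab)
  omega

theorem IsRankFunctionOn.shift_above (h : IsFCHeap (fun s t => CoxeterMatrix.A n s t) ε)
    {D : Set E} {ρ : E → ℤ} (hρ : IsRankFunctionOn D ρ) {t : ℕ} (ht : ∀ y ∈ D, (ε y : ℕ) ≠ t)
    (k : ℤ) : IsRankFunctionOn D (fun y => if t < (ε y : ℕ) then ρ y + k else ρ y) := by
  intro a ha b hb hab
  have hside : t < (ε a : ℕ) ↔ t < (ε b : ℕ) := by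
    have := h.label_covBy hab
    have := ht a ha
    have := ht b hb
    omega
  simp only [hside, hρ a ha b hb hab]
  split_ifs <;> ring

def IooNeighbours (ε : E → Fin n) (u v : E) : Prop :=
  ∃ a b, Set.Ioo u v = {a, b} ∧ (ε a : ℕ) + 1 = ε u ∧ (ε u : ℕ) + 1 = ε b

variable [Finite E] {u v : E}

theorem MinBalanced.false_of_repeated_neighbour (huv : MinBalanced ε u v)
    (hsub : ∀ c d, u < c → MinBalanced ε c d → IooNeighbours ε c d)
    {d₁ d₂ : E} (h₁ : d₁ ∈ Set.Ioo u v) (h₂ : d₂ ∈ Set.Ioo u v) (hlt : d₁ < d₂)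
    (hl : ε d₁ = ε d₂) (hadj : (ε d₁ : ℕ) + 1 = ε u ∨ (ε u : ℕ) + 1 = ε d₁) : False := by
  obtain ⟨c, hd₁c, hc⟩ := exists_minBalanced_of_lt hlt hl
  obtain ⟨a, b, hIoo, ha, hb⟩ := hsub c d₂ (h₁.1.trans_le hd₁c) hc
  have hcl : ε c = ε d₁ := hc.2.1.trans hl.symm
  obtain ⟨γ, hγ, hγl⟩ : ∃ γ ∈ Set.Ioo c d₂, ε γ = ε u := by
    rcases hadj with hadj | hadj
    · exact ⟨b, by simp [hIoo], Fin.ext (by rw [hcl] at hb; omega)⟩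
    · exact ⟨a, by simp [hIoo], Fin.ext (by rw [hcl] at ha; omega)⟩
  exact huv.label_ne ⟨h₁.1.trans (hd₁c.trans_lt hγ.1), hγ.2.trans h₂.2⟩ hγl

theorem MinBalanced.label_adjacent (h : IsHeap (fun s t => CoxeterMatrix.A n s t ≠ 2) ε)
    (huv : MinBalanced ε u v) (hsub : ∀ c d, u < c → MinBalanced ε c d → IooNeighbours ε c d)
    {γ : E} (hγ : γ ∈ Set.Ioo u v) : (ε γ : ℕ) + 1 = ε u ∨ (ε u : ℕ) + 1 = ε γ := by
  have hne := Fin.val_injective.ne (huv.label_ne hγ)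
  by_contra hfar
  -- the neighbour `s` of `ε u` on the side of `ε γ` occurs both below and above `γ`
  obtain ⟨s, hadj, hsγ, hsu⟩ : ∃ s : ℕ, (s + 1 = ε u ∨ (ε u : ℕ) + 1 = s) ∧ (ε γ : ℕ) ≠ s ∧
      s ∈ Set.uIcc (ε u : ℕ) (ε γ) := by
    rcases lt_or_gt_of_ne hne with hlt | hlt
    · exact ⟨ε u - 1, by omega, by omega, Set.mem_uIcc.2 (by omega)⟩
    · exact ⟨ε u + 1, by omega, by omega, Set.mem_uIcc.2 (by omega)⟩
  obtain ⟨w₁, hw₁, hw₁l⟩ := h.exists_mem_Icc_label_eq hγ.1.le hsu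
  obtain ⟨w₂, hw₂, hw₂l⟩ := h.exists_mem_Icc_label_eq hγ.2.le
    (by rwa [Set.uIcc_comm, ← huv.2.1])
  have huw₁ : u < w₁ := hw₁.1.lt_of_ne (by rintro rfl; omega)
  have hw₁γ : w₁ < γ := hw₁.2.lt_of_ne (by rintro rfl; omega)
  have hγw₂ : γ < w₂ := hw₂.1.lt_of_ne (by rintro rfl; omega)
  have hw₂v : w₂ < v := hw₂.2.lt_of_ne (by rintro rfl; rw [← huv.2.1] at hw₂l; omega)
  exact huv.false_of_repeated_neighbour hsub ⟨huw₁, hw₁γ.trans hγ.2⟩ ⟨hγ.1.trans hγw₂, hw₂v⟩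
    (hw₁γ.trans hγw₂) (Fin.ext (hw₁l.trans hw₂l.symm)) (by omega)

theorem MinBalanced.eq_of_label_eq (h : IsHeap (fun s t => CoxeterMatrix.A n s t ≠ 2) ε)
    (huv : MinBalanced ε u v) (hsub : ∀ c d, u < c → MinBalanced ε c d → IooNeighbours ε c d)
    {d₁ d₂ : E} (h₁ : d₁ ∈ Set.Ioo u v) (h₂ : d₂ ∈ Set.Ioo u v) (hl : ε d₁ = ε d₂) :
    d₁ = d₂ := by
  have hadj := huv.label_adjacent h hsub h₁
  rcases h.1 d₁ d₂ (CoxeterMatrix.A_ne_two_iff.2 (by rw [hl]; omega)) with h12 | h21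
  · by_contra hne
    exact huv.false_of_repeated_neighbour hsub h₁ h₂ (h12.lt_of_ne hne) hl hadj
  · by_contra hne
    exact huv.false_of_repeated_neighbour hsub h₂ h₁ (h21.lt_of_ne (Ne.symm hne)) hl.symm
      (by rwa [← hl])

theorem IsFCHeap.iooNeighbours_of_minBalanced
    (h : IsFCHeap (fun s t => CoxeterMatrix.A n s t) ε) (huv : MinBalanced ε u v) :
    IooNeighbours ε u v := by
  induction u using WellFoundedGT.induction generalizing v with
  | _ u ih =>
  have hsub : ∀ c d, u < c → MinBalanced ε c d → IooNeighbours ε c d :=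
    fun c d huc hcd => ih c huc hcd
  have hadj := fun γ (hγ : γ ∈ Set.Ioo u v) => huv.label_adjacent h.1 hsub hγ
  have huniq : ∀ {d₁ d₂}, d₁ ∈ Set.Ioo u v → d₂ ∈ Set.Ioo u v → ε d₁ = ε d₂ → d₁ = d₂ :=
    huv.eq_of_label_eq h.1 hsub
  obtain ⟨γ₀, hγ₀⟩ : (Set.Ioo u v).Nonempty := by
    by_contra hempty
    exact h.2.2 u v ⟨huv.1, fun γ h₁ h₂ => hempty ⟨γ, h₁, h₂⟩⟩ huv.2.1
  obtain ⟨γ₁, hγ₁, hne⟩ : ∃ γ₁ ∈ Set.Ioo u v, ε γ₁ ≠ ε γ₀ := by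
    by_contra! hsame
    refine h.Ioo_ne_singleton (c := γ₀) (CoxeterMatrix.A_eq_three ?_) huv.2.1.symm ?_
    · have := hadj γ₀ hγ₀
      omega
    · ext γ
      exact ⟨fun hγ => huniq hγ hγ₀ (hsame γ hγ), fun hγ => hγ ▸ hγ₀⟩
  have hneighbours : ∀ a ∈ Set.Ioo u v, ∀ b ∈ Set.Ioo u v, (ε a : ℕ) + 1 = ε u → (ε u : ℕ) + 1 = ε b →
      IooNeighbours ε u v := by
    refine fun a ha b hb hal hbl => ⟨a, b, Set.ext fun γ => ⟨fun hγ => ?_, ?_⟩, hal, hbl⟩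
    · rcases hadj γ hγ with hγl | hγl
      · exact .inl (huniq hγ ha (Fin.ext (by omega)))
      · exact .inr (huniq hγ hb (Fin.ext (by omega)))
    · rintro (rfl | rfl)
      exacts [ha, hb]
  have := Fin.val_injective.ne hne
  rcases hadj γ₀ hγ₀ with h₀ | h₀
  · exact hneighbours γ₀ hγ₀ γ₁ hγ₁ h₀ (by have := hadj γ₁ hγ₁; omega)
  · exact hneighbours γ₁ hγ₁ γ₀ hγ₀ (by have := hadj γ₁ hγ₁; omega) h₀

theorem IsFCHeap.exists_common_lowerCover (h : IsFCHeap (fun s t => CoxeterMatrix.A n s t) ε)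
    {a b x z : E} (ha : a ⋖ x) (hb : b ⋖ x) (hal : (ε a : ℕ) + 1 = ε x)
    (hbl : (ε x : ℕ) + 1 = ε b) (hzx : z < x) (hzl : ε z = ε x) : ∃ c, c ⋖ a ∧ c ⋖ b := by
  obtain ⟨c, -, hc⟩ := exists_minBalanced_of_lt hzx hzl
  obtain ⟨a₀, b₀, hIoo, ha₀, hb₀⟩ := h.iooNeighbours_of_minBalanced hc
  have hmem : ∀ d, d ⋖ x → ε d ≠ ε x → d ∈ Set.Ioo c x := by
    intro d hd hdl
    have hdx := h.label_covBy hd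
    rcases h.1.1 c d (CoxeterMatrix.A_ne_two_iff.2 (by rw [hc.2.1]; omega)) with hcd | hdc
    · exact ⟨hcd.lt_of_ne (by rintro rfl; exact hdl hc.2.1), hd.lt⟩
    · exact (hd.2 (hdc.lt_of_ne (by rintro rfl; exact hdl hc.2.1)) hc.1).elim
  have ha' := hmem a ha (fun e => by rw [← e] at hal; omega)
  have hb' := hmem b hb (fun e => by rw [← e] at hbl; omega)
  have hpair : Set.Ioo c x = {a, b} := by
    rw [hIoo] at ha' hb' ⊢
    rcases ha' with rfl | rfl <;> rcases hb' with rfl | rfl <;> first | rfl | omega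
  have hcov : ∀ d e, d ⋖ x → e ⋖ x → Set.Ioo c x = {d, e} → c ⋖ d := by
    intro d e hd he hde
    have hd' : d ∈ Set.Ioo c x := by simp [hde]
    refine ⟨hd'.1, fun γ hcγ hγd => ?_⟩
    have hγ : γ ∈ Set.Ioo c x := ⟨hcγ, hγd.trans hd.lt⟩
    rw [hde] at hγ
    rcases hγ with rfl | rfl
    · exact hγd.false
    · exact he.2 hγd hd.lt
  exact ⟨c, hcov a b ha hb hpair, hcov b a hb ha (hpair.trans (Set.pair_comm a b))⟩

theorem IsFCHeap.exists_rank_eq_on_lowerCovers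
    (h : IsFCHeap (fun s t => CoxeterMatrix.A n s t) ε) {D : Set E} {ρ : E → ℤ} {x : E}
    (hρ : IsRankFunctionOn D ρ) (hxD : x ∉ D) (hlow : ∀ y < x, y ∈ D)
    (hmax : ∀ y ∈ D, ¬ x < y) :
    ∃ ρ', IsRankFunctionOn D ρ' ∧ ∀ c d, c ⋖ x → d ⋖ x → ρ' c = ρ' d := by
  by_cases hpair : ∃ a b, a ⋖ x ∧ b ⋖ x ∧ (ε a : ℕ) + 1 = ε x ∧ (ε x : ℕ) + 1 = ε b
  · obtain ⟨a, b, ha, hb, hal, hbl⟩ := hpair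
    have hcovers : ∀ c, c ⋖ x → c = a ∨ c = b := fun c hc =>
      (h.label_covBy hc).imp
        (fun hcl => h.1.eq_of_covBy_of_concurrent hc ha (CoxeterMatrix.A_ne_two_iff.2 (by omega)))
        (fun hcl => h.1.eq_of_covBy_of_concurrent hc hb (CoxeterMatrix.A_ne_two_iff.2 (by omega)))
    obtain ⟨ρ', hρ', hab⟩ : ∃ ρ', IsRankFunctionOn D ρ' ∧ ρ' a = ρ' b := by
      by_cases hz : ∃ z < x, ε z = ε x
      · obtain ⟨z, hzx, hzl⟩ := hz
        obtain ⟨c, hca, hcb⟩ := h.exists_common_lowerCover ha hb hal hbl hzx hzl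
        have hcD := hlow c (hca.lt.trans ha.lt)
        exact ⟨ρ, hρ, by rw [hρ c hcD a (hlow a ha.lt) hca, hρ c hcD b (hlow b hb.lt) hcb]⟩
      · -- no piece of `D` has label `ε x`, so the pieces above that label can be moved freely
        have hno : ∀ y ∈ D, (ε y : ℕ) ≠ ε x := by
          intro y hy hyl
          have hyx : y ≠ x := ne_of_mem_of_not_mem hy hxD
          rcases h.1.1 y x (CoxeterMatrix.A_ne_two_iff.2 (by omega)) with hyx' | hxy
          · exact hz ⟨y, hyx'.lt_of_ne hyx, Fin.ext hyl⟩
          · exact hmax y hy (hxy.lt_of_ne hyx.symm)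
        refine ⟨_, hρ.shift_above h hno (ρ a - ρ b), ?_⟩
        simp only [show ¬ (ε x : ℕ) < ε a by omega, show (ε x : ℕ) < ε b by omega, if_true,
          if_false]
        ring
    refine ⟨ρ', hρ', fun c d hc hd => ?_⟩
    rcases hcovers c hc with rfl | rfl <;> rcases hcovers d hd with rfl | rfl <;> simp [hab]
  · refine ⟨ρ, hρ, fun c d hc hd => congrArg ρ (h.1.eq_of_covBy_of_concurrent hc hd ?_)⟩
    have hcd : ¬ ((ε c : ℕ) + 1 = ε x ∧ (ε x : ℕ) + 1 = ε d) := fun h' => hpair ⟨c, d, hc, hd, h'⟩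
    have hdc : ¬ ((ε d : ℕ) + 1 = ε x ∧ (ε x : ℕ) + 1 = ε c) := fun h' => hpair ⟨d, c, hd, hc, h'⟩
    have := h.label_covBy hc
    have := h.label_covBy hd
    exact CoxeterMatrix.A_ne_two_iff.2 (by omega)

theorem IsFCHeap.exists_rankFunctionOn (h : IsFCHeap (fun s t => CoxeterMatrix.A n s t) ε)
    {D : Set E} (hD : IsLowerSet D) : ∃ ρ, IsRankFunctionOn D ρ := by
  classical
  induction D using WellFoundedLT.induction with
  | _ D ih =>
  rcases D.eq_empty_or_nonempty with rfl | hne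
  · exact ⟨0, fun a ha => ha.elim⟩
  obtain ⟨x, hxD, hx⟩ := D.toFinite.exists_maximal hne
  have hmax : ∀ y ∈ D, ¬ x < y := fun y hy hxy => hxy.not_ge (hx hy hxy.le)
  have hD' : IsLowerSet (D \ {x}) :=
    hD.sdiff fun y hy c hc hcy => by_contra fun hyx =>
      hmax y hy ((Set.mem_singleton_iff.1 hc ▸ hcy).lt_of_ne (Ne.symm hyx))
  obtain ⟨ρ, hρ⟩ := ih (D \ {x}) (Set.sdiff_singleton_ssubset.2 hxD) hD'
  obtain ⟨ρ', hρ', hcov⟩ := h.exists_rank_eq_on_lowerCovers hρ (fun hx' => hx'.2 rfl)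
    (fun y hy => ⟨hD hy.le hxD, hy.ne⟩) (fun y hy => hmax y hy.1)
  by_cases hc : ∃ c, c ⋖ x
  · obtain ⟨c, hc⟩ := hc
    exact ⟨_, hρ'.update hmax fun d hd => congrArg (· + 1) (hcov c d hc hd)⟩
  · exact ⟨_, hρ'.update (w := 0) hmax fun d hd => (hc ⟨d, hd⟩).elim⟩

end TypeA

/-- Remark 3.3.7 (second part): every heap of a fully commutative element of a
Coxeter group of type Aₙ is ranked. -/
theorem ranked_of_typeA_fcHeap {E : Type*} [PartialOrder E] [Finite E]
    (n : ℕ) (ε : E → Fin n)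
    (hheap : IsFCHeap (fun s t => CoxeterMatrix.Aₙ n s t) ε) :
    Ranked E := by
  obtain ⟨ρ, hρ⟩ := hheap.exists_rankFunctionOn isLowerSet_univ
  exact ⟨ρ, fun a b hab => hρ a trivial b trivial hab⟩
end
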